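/- arXiv:1608.01384 — 2 statements merged into one kernel-verified Lean document; each statement's English description precedes it below -/
import Mathlib

section
/- Let φ : (0,∞) → (0,∞) be nondecreasing and suppose there exist a > 0 and β ∈ (0,2) with a·λ^β·φ(t) ≤ φ(λ·t) for all λ ≥ 1 and t ≥ 1. Then for every R ∈ (0,1], the Lebesgue integral ∫₀^R 1/(s·φ(s⁻²)) ds is at most 1/(2·a·β) · 1/φ(R⁻²). -/
open MeasureTheory Set Real

/-!
Applying the scaling condition with `λ = (R/s)²` and `t = R⁻²` gives
`φ(s⁻²) ≥ a (R/s)^{2β} φ(R⁻²)` for `0 < s ≤ R ≤ 1`, so the integrand is at most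
`s^{2β-1} / (a R^{2β} φ(R⁻²))`, whose integral over `(0, R)` is `1 / (2aβ φ(R⁻²))`.
-/

lemma lintegral_Ioo_rpow_sub_one {γ R : ℝ} (hγ : 0 < γ) (hR : 0 < R) :
    ∫⁻ s in Ioo 0 R, ENNReal.ofReal (s ^ (γ - 1)) = ENNReal.ofReal (R ^ γ / γ) := by
  rw [← ofReal_integral_eq_lintegral_ofReal
    ((intervalIntegral.integrableOn_Ioo_rpow_iff hR).2 (by linarith))
    ((ae_restrict_mem measurableSet_Ioo).mono fun s hs ↦ rpow_nonneg hs.1.le _),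
    ← integral_Ioc_eq_integral_Ioo, ← intervalIntegral.integral_of_le hR.le,
    integral_rpow (Or.inl (by linarith)), sub_add_cancel, zero_rpow hγ.ne', sub_zero]

section LowerScaling

variable {φ : ℝ → ℝ} {a β : ℝ}

lemma mul_rpow_mul_le_of_lowerScaling
    (hscal : ∀ lam t : ℝ, 1 ≤ lam → 1 ≤ t → a * lam ^ β * φ t ≤ φ (lam * t))
    {s R : ℝ} (hs : 0 < s) (hsR : s ≤ R) (hR : R ≤ 1) :
    a * R ^ (2 * β) * φ (R ^ 2)⁻¹ ≤ s ^ (2 * β) * φ (s ^ 2)⁻¹ := by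
  have hR0 : 0 < R := hs.trans_le hsR
  have hlam : 1 ≤ (R / s) ^ 2 := one_le_pow₀ ((one_le_div hs).2 hsR)
  have ht : 1 ≤ (R ^ 2)⁻¹ := one_le_inv₀ (by positivity) |>.2 (pow_le_one₀ hR0.le hR)
  have h := hscal _ _ hlam ht
  rw [show (R / s) ^ 2 * (R ^ 2)⁻¹ = (s ^ 2)⁻¹ by field_simp,
    ← rpow_natCast, ← rpow_mul (by positivity), div_rpow hR0.le hs.le, Nat.cast_ofNat] at h
  calc a * R ^ (2 * β) * φ (R ^ 2)⁻¹
      = s ^ (2 * β) * (a * (R ^ (2 * β) / s ^ (2 * β)) * φ (R ^ 2)⁻¹) := by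
        field_simp
    _ ≤ s ^ (2 * β) * φ (s ^ 2)⁻¹ := mul_le_mul_of_nonneg_left h (by positivity)

lemma one_div_mul_le_of_lowerScaling
    (hscal : ∀ lam t : ℝ, 1 ≤ lam → 1 ≤ t → a * lam ^ β * φ t ≤ φ (lam * t))
    (hpos : ∀ t : ℝ, 0 < t → 0 < φ t) (ha : 0 < a)
    {s R : ℝ} (hs : 0 < s) (hsR : s ≤ R) (hR : R ≤ 1) :
    1 / (s * φ (s ^ 2)⁻¹) ≤ (a * R ^ (2 * β) * φ (R ^ 2)⁻¹)⁻¹ * s ^ (2 * β - 1) := by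
  have hR0 : 0 < R := hs.trans_le hsR
  have hφs := hpos _ (by positivity : 0 < (s ^ 2)⁻¹)
  have hφR := hpos _ (by positivity : 0 < (R ^ 2)⁻¹)
  rw [inv_mul_eq_div, div_le_div_iff₀ (by positivity) (by positivity), one_mul]
  calc a * R ^ (2 * β) * φ (R ^ 2)⁻¹ ≤ s ^ (2 * β) * φ (s ^ 2)⁻¹ :=
        mul_rpow_mul_le_of_lowerScaling hscal hs hsR hR
    _ = s ^ (2 * β - 1) * (s * φ (s ^ 2)⁻¹) := by
        rw [← mul_assoc, ← rpow_add_one hs.ne', sub_add_cancel]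

end LowerScaling

theorem integral_inv_s_phi_bound_general (φ : ℝ → ℝ) (a β : ℝ)
    (hpos : ∀ t : ℝ, 0 < t → 0 < φ t)
    (ha : 0 < a) (hβ : β ∈ Set.Ioo (0 : ℝ) 2)
    (hscal : ∀ lam t : ℝ, 1 ≤ lam → 1 ≤ t → a * lam ^ β * φ t ≤ φ (lam * t)) :
    ∀ R : ℝ, R ∈ Set.Ioc (0 : ℝ) 1 →
      (∫⁻ s in Set.Ioo (0 : ℝ) R, ENNReal.ofReal (1 / (s * φ ((s ^ 2)⁻¹)))) ≤
        ENNReal.ofReal (1 / (2 * a * β) * (1 / φ ((R ^ 2)⁻¹))) := by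
  rintro R ⟨hR0, hR1⟩
  have hφR := hpos _ (by positivity : 0 < (R ^ 2)⁻¹)
  calc ∫⁻ s in Ioo 0 R, ENNReal.ofReal (1 / (s * φ (s ^ 2)⁻¹))
      ≤ ∫⁻ s in Ioo 0 R, ENNReal.ofReal (a * R ^ (2 * β) * φ (R ^ 2)⁻¹)⁻¹ *
          ENNReal.ofReal (s ^ (2 * β - 1)) := by
        refine setLIntegral_mono' measurableSet_Ioo fun s hs ↦ ?_
        rw [← ENNReal.ofReal_mul (by positivity)]
        exact ENNReal.ofReal_le_ofReal
          (one_div_mul_le_of_lowerScaling hscal hpos ha hs.1 hs.2.le hR1)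
    _ = ENNReal.ofReal ((a * R ^ (2 * β) * φ (R ^ 2)⁻¹)⁻¹ * (R ^ (2 * β) / (2 * β))) := by
        rw [lintegral_const_mul' _ _ ENNReal.ofReal_ne_top,
          lintegral_Ioo_rpow_sub_one (by linarith [hβ.1]) hR0,
          ENNReal.ofReal_mul (by positivity)]
    _ = ENNReal.ofReal (1 / (2 * a * β) * (1 / φ (R ^ 2)⁻¹)) := by
        have hRβ : R ^ (2 * β) ≠ 0 := (rpow_pos_of_pos hR0 _).ne'
        congr 1
        field_simp

/-- The integral estimate `∫₀^R (s φ(s⁻²))⁻¹ ds ≤ (2aβ)⁻¹ φ(R⁻²)⁻¹` under the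
lower scaling condition (H1). -/
theorem integral_inv_s_phi_bound (φ : ℝ → ℝ) (a β : ℝ)
    (hpos : ∀ t : ℝ, 0 < t → 0 < φ t)
    (hmono : MonotoneOn φ (Set.Ioi (0 : ℝ)))
    (ha : 0 < a) (hβ : β ∈ Set.Ioo (0 : ℝ) 2)
    (hscal : ∀ lam t : ℝ, 1 ≤ lam → 1 ≤ t → a * lam ^ β * φ t ≤ φ (lam * t)) :
    ∀ R : ℝ, R ∈ Set.Ioc (0 : ℝ) 1 →
      (∫⁻ s in Set.Ioo (0 : ℝ) R, ENNReal.ofReal (1 / (s * φ ((s ^ 2)⁻¹)))) ≤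
        ENNReal.ofReal (1 / (2 * a * β) * (1 / φ ((R ^ 2)⁻¹))) :=
  integral_inv_s_phi_bound_general φ a β hpos ha hβ hscal
end

section
/- Let n ≥ 2 and let φ : (0,∞) → (0,∞) be nondecreasing, satisfy φ(λ·t) ≤ λ·φ(t) for all λ ≥ 1 and t > 0, and satisfy a·λ^β·φ(t) ≤ φ(λ·t) for all λ ≥ 1 and t ≥ 1, where a > 0 and β ∈ (0,2). Then there exists a constant C > 0, depending only on n, a and β, such that for every ρ ∈ (0,½], every x ∈ ℝⁿ, and all distinct v, w in the open ball B(x,ρ): ∫_{B(x,ρ)} [ φ(|v−w|⁻²)·|v−w|ⁿ ] / [ φ(|v−y|⁻²)·|v−y|ⁿ · φ(|y−w|⁻²)·|y−w|ⁿ ] dy ≤ C / φ((2ρ)⁻²). -/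
/-!
Write `F t = φ (t⁻²) tⁿ` (`phiKernel φ n`), so that the integrand is
`F |v-w| / (F |v-y| F |y-w|)`. The upper scaling bound makes `F` nondecreasing and monotonicity
of `φ` gives `F (2t) ≤ 2ⁿ F t`; since `|v-w| ≤ 2 max (|v-y|, |y-w|)`, the integrand is at most
`2ⁿ (1 / F |v-y| + 1 / F |y-w|)`. The lower scaling condition at the scale `R = 2ρ ≤ 1` gives
`1 / F u ≤ u ^ (2β-n) / (a φ (R⁻²) R ^ (2β))` for `u ≤ R`, and by scaling
`∫_{B(z,R)} |z-y| ^ (2β-n) dy = R ^ (2β) ∫_{B(0,1)} |u| ^ (2β-n) du`, which is finite as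
`2β - n > -n`.
-/

open MeasureTheory Metric Module Set
open scoped ENNReal

theorem ball_subset_ball_two_mul {X : Type*} [PseudoMetricSpace X] {x z : X} {ρ : ℝ}
    (hz : z ∈ ball x ρ) : ball x ρ ⊆ ball z (2 * ρ) :=
  ball_subset_ball' (by rw [mem_ball'] at hz; linarith)

theorem div_mul_le_mul_inv_add_inv {X c p q : ℝ} (hp : 0 < p) (hq : 0 < q) (hc : 0 ≤ c)
    (hX : X ≤ c * max p q) : X / (p * q) ≤ c * (p⁻¹ + q⁻¹) := by
  have h : c * (p⁻¹ + q⁻¹) * (p * q) = c * (p + q) := by field_simp; ring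
  rw [div_le_iff₀ (mul_pos hp hq), h]
  exact hX.trans (by gcongr; exact max_le (by linarith) (by linarith))

section RieszPotential

variable {E : Type*} [NormedAddCommGroup E] [NormedSpace ℝ E] [FiniteDimensional ℝ E]
  [MeasurableSpace E] [BorelSpace E] (μ : Measure E) [μ.IsAddHaarMeasure]

theorem setLIntegral_ball_zero_norm_rpow {R : ℝ} (hR : 0 < R) (s : ℝ) :
    ∫⁻ u in ball (0 : E) R, ENNReal.ofReal (‖u‖ ^ s) ∂μ =
      ENNReal.ofReal (R ^ (s + finrank ℝ E)) *
        ∫⁻ u in ball (0 : E) 1, ENNReal.ofReal (‖u‖ ^ s) ∂μ := by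
  have hpre : (R • · : E → E) ⁻¹' ball 0 R = ball 0 1 := by
    ext u
    simp [norm_smul, abs_of_pos hR, mul_lt_iff_lt_one_right hR]
  have hscale := setLIntegral_map (μ := μ) (measurableSet_ball (x := (0 : E)) (ε := R))
    (by fun_prop : Measurable fun u : E => ENNReal.ofReal (‖u‖ ^ s))
    (measurable_const_smul R)
  rw [Measure.map_addHaar_smul μ hR.ne', hpre, Measure.restrict_smul,
    lintegral_smul_measure] at hscale
  simp only [norm_smul, Real.norm_of_nonneg hR.le, Real.mul_rpow hR.le (norm_nonneg _),
    ENNReal.ofReal_mul (Real.rpow_nonneg hR.le s)] at hscale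
  rw [lintegral_const_mul' _ _ ENNReal.ofReal_ne_top, smul_eq_mul,
    abs_of_pos (by positivity)] at hscale
  have hcancel : ENNReal.ofReal (R ^ finrank ℝ E) * ENNReal.ofReal (R ^ finrank ℝ E)⁻¹ = 1 := by
    rw [← ENNReal.ofReal_mul (by positivity), mul_inv_cancel₀ (by positivity), ENNReal.ofReal_one]
  calc ∫⁻ u in ball (0 : E) R, ENNReal.ofReal (‖u‖ ^ s) ∂μ
      = ENNReal.ofReal (R ^ finrank ℝ E) * (ENNReal.ofReal (R ^ finrank ℝ E)⁻¹ *
          ∫⁻ u in ball (0 : E) R, ENNReal.ofReal (‖u‖ ^ s) ∂μ) := by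
        rw [← mul_assoc, hcancel, one_mul]
    _ = _ := by
        rw [hscale, ← mul_assoc, ← ENNReal.ofReal_mul (by positivity), ← Real.rpow_natCast,
          ← Real.rpow_add hR, add_comm]

theorem setLIntegral_ball_dist_rpow (z : E) {R : ℝ} (hR : 0 < R) (s : ℝ) :
    ∫⁻ y in ball z R, ENNReal.ofReal (dist z y ^ s) ∂μ =
      ENNReal.ofReal (R ^ (s + finrank ℝ E)) *
        ∫⁻ u in ball (0 : E) 1, ENNReal.ofReal (‖u‖ ^ s) ∂μ := by
  rw [← setLIntegral_ball_zero_norm_rpow μ hR,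
    ← (measurePreserving_add_left μ z).setLIntegral_comp_preimage_emb
      (measurableEmbedding_addLeft z)]
  simp

theorem setLIntegral_unitBall_norm_rpow_lt_top [Nontrivial E] {s : ℝ}
    (hs : -(finrank ℝ E : ℝ) < s) :
    ∫⁻ u in ball (0 : E) 1, ENNReal.ofReal (‖u‖ ^ s) ∂μ < ∞ :=
  IntegrableOn.setLIntegral_lt_top <| integrableOn_ball_of_norm_le_rpow (C := 1) (α := -s)
    finrank_pos (by linarith)
    (Filter.Eventually.of_forall fun u => by
      rw [neg_neg, one_mul, Real.norm_of_nonneg (Real.rpow_nonneg (norm_nonneg u) s)])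
    (measurable_norm.pow_const s).aestronglyMeasurable

theorem setLIntegral_unitBall_norm_rpow_pos [Nontrivial E] (s : ℝ) :
    0 < ∫⁻ u in ball (0 : E) 1, ENNReal.ofReal (‖u‖ ^ s) ∂μ := by
  rw [setLIntegral_pos_iff (by fun_prop)]
  calc 0 < μ (ball 0 1) := measure_ball_pos μ 0 one_pos
    _ = μ (ball 0 1 \ {0}) := (measure_sdiff_null (measure_singleton 0)).symm
    _ ≤ μ (Function.support (fun u : E => ENNReal.ofReal (‖u‖ ^ s)) ∩ ball 0 1) := by
        refine measure_mono fun u ⟨hu, hu0⟩ => ⟨?_, hu⟩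
        have : 0 < ‖u‖ := norm_pos_iff.2 hu0
        simp only [Function.mem_support, ne_eq, ENNReal.ofReal_eq_zero, not_le]
        positivity

theorem setLIntegral_ball_le_of_le_dist_rpow_add {x v w : E} {ρ c s : ℝ} (hρ : 0 < ρ)
    (hv : v ∈ ball x ρ) (hw : w ∈ ball x ρ) (hc : 0 ≤ c) {f : E → ℝ}
    (hf : ∀ y ∈ ball x ρ, f y ≤ c * (dist v y ^ s + dist y w ^ s)) :
    ∫⁻ y in ball x ρ, ENNReal.ofReal (f y) ∂μ ≤
      ENNReal.ofReal (2 * c * (2 * ρ) ^ (s + finrank ℝ E)) *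
        ∫⁻ u in ball (0 : E) 1, ENNReal.ofReal (‖u‖ ^ s) ∂μ := by
  have hpole : ∀ z ∈ ball x ρ, ∫⁻ y in ball x ρ, ENNReal.ofReal (c * dist z y ^ s) ∂μ ≤
      ENNReal.ofReal (c * (2 * ρ) ^ (s + finrank ℝ E)) *
        ∫⁻ u in ball (0 : E) 1, ENNReal.ofReal (‖u‖ ^ s) ∂μ := by
    intro z hz
    simp_rw [ENNReal.ofReal_mul hc]
    rw [lintegral_const_mul' _ _ ENNReal.ofReal_ne_top, mul_assoc,
      ← setLIntegral_ball_dist_rpow μ z (by positivity) s]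
    exact mul_le_mul_of_nonneg_left (lintegral_mono_set (ball_subset_ball_two_mul hz)) zero_le
  calc ∫⁻ y in ball x ρ, ENNReal.ofReal (f y) ∂μ
      ≤ ∫⁻ y in ball x ρ, (ENNReal.ofReal (c * dist v y ^ s) +
          ENNReal.ofReal (c * dist w y ^ s)) ∂μ := by
        refine setLIntegral_mono' measurableSet_ball fun y hy => ?_
        rw [← ENNReal.ofReal_add (by positivity) (by positivity), dist_comm w y, ← mul_add]
        exact ENNReal.ofReal_le_ofReal (hf y hy)
    _ = (∫⁻ y in ball x ρ, ENNReal.ofReal (c * dist v y ^ s) ∂μ) +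
          ∫⁻ y in ball x ρ, ENNReal.ofReal (c * dist w y ^ s) ∂μ :=
        lintegral_add_left (by fun_prop) _
    _ ≤ _ := (add_le_add (hpole v hv) (hpole w hw)).trans_eq <| by
        rw [← add_mul, ← ENNReal.ofReal_add (by positivity) (by positivity)]
        ring_nf

end RieszPotential

noncomputable def phiKernel (φ : ℝ → ℝ) (n : ℕ) (t : ℝ) : ℝ := φ ((t ^ 2)⁻¹) * t ^ n

section PhiKernel

variable {φ : ℝ → ℝ} {n : ℕ}

theorem phiKernel_pos (hφ : ∀ t, 0 < t → 0 < φ t) {t : ℝ} (ht : 0 < t) :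
    0 < phiKernel φ n t :=
  mul_pos (hφ _ (by positivity)) (pow_pos ht n)

theorem phiKernel_zero (hn : n ≠ 0) : phiKernel φ n 0 = 0 := by
  simp [phiKernel, hn]

theorem phiKernel_monotoneOn (hφ : ∀ t, 0 < t → 0 ≤ φ t)
    (hup : ∀ lam t : ℝ, 1 ≤ lam → 0 < t → φ (lam * t) ≤ lam * φ t) (hn : 2 ≤ n) :
    MonotoneOn (phiKernel φ n) (Ioi 0) := by
  intro t₁ (ht₁ : 0 < t₁) t₂ (ht₂ : 0 < t₂) h
  obtain ⟨m, rfl⟩ : ∃ m, n = m + 2 := ⟨n - 2, by omega⟩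
  have hscale : φ ((t₁ ^ 2)⁻¹) ≤ t₂ ^ 2 / t₁ ^ 2 * φ ((t₂ ^ 2)⁻¹) := by
    have h := hup (t₂ ^ 2 / t₁ ^ 2) (t₂ ^ 2)⁻¹ ((one_le_div (by positivity)).2 (by gcongr))
      (by positivity)
    rwa [div_mul_eq_mul_div, mul_inv_cancel₀ (by positivity), one_div] at h
  have hφ₂ := hφ _ (inv_pos.2 (pow_pos ht₂ 2))
  calc phiKernel φ (m + 2) t₁
      ≤ t₂ ^ 2 / t₁ ^ 2 * φ ((t₂ ^ 2)⁻¹) * t₁ ^ (m + 2) := by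
        unfold phiKernel; gcongr
    _ = φ ((t₂ ^ 2)⁻¹) * t₂ ^ 2 * t₁ ^ m := by
        field_simp; ring
    _ ≤ φ ((t₂ ^ 2)⁻¹) * t₂ ^ 2 * t₂ ^ m := by gcongr
    _ = phiKernel φ (m + 2) t₂ := by unfold phiKernel; ring

theorem phiKernel_two_mul_le (hmono : MonotoneOn φ (Ioi 0)) {t : ℝ} (ht : 0 < t) :
    phiKernel φ n (2 * t) ≤ 2 ^ n * phiKernel φ n t := by
  have h : φ (((2 * t) ^ 2)⁻¹) ≤ φ ((t ^ 2)⁻¹) :=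
    hmono (by simp only [mem_Ioi]; positivity) (by simp only [mem_Ioi]; positivity)
      (by gcongr; nlinarith)
  calc phiKernel φ n (2 * t) = φ (((2 * t) ^ 2)⁻¹) * (2 ^ n * t ^ n) := by
        simp only [phiKernel, mul_pow]
    _ ≤ φ ((t ^ 2)⁻¹) * (2 ^ n * t ^ n) := by gcongr
    _ = 2 ^ n * phiKernel φ n t := by rw [phiKernel]; ring

theorem phiKernel_le_of_le_add (hF : MonotoneOn (phiKernel φ n) (Ioi 0))
    (hmono : MonotoneOn φ (Ioi 0)) {d r t : ℝ} (hd : 0 < d) (hr : 0 < r) (ht : 0 < t)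
    (h : d ≤ r + t) :
    phiKernel φ n d ≤ 2 ^ n * max (phiKernel φ n r) (phiKernel φ n t) := by
  have hmax : 0 < max r t := lt_max_of_lt_left hr
  calc phiKernel φ n d ≤ phiKernel φ n (2 * max r t) :=
        hF hd (by simp only [mem_Ioi]; positivity)
          (by linarith [le_max_left r t, le_max_right r t])
    _ ≤ 2 ^ n * phiKernel φ n (max r t) := phiKernel_two_mul_le hmono hmax
    _ = 2 ^ n * max (phiKernel φ n r) (phiKernel φ n t) := by rw [hF.map_max hr ht]

theorem phiKernel_inv_le (hφ : ∀ t, 0 < t → 0 < φ t) {a β : ℝ} (ha : 0 < a)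
    (hlow : ∀ lam t : ℝ, 1 ≤ lam → 1 ≤ t → a * lam ^ β * φ t ≤ φ (lam * t))
    {u R : ℝ} (hu : 0 < u) (huR : u ≤ R) (hR : R ≤ 1) :
    (phiKernel φ n u)⁻¹ ≤ (a * φ ((R ^ 2)⁻¹) * R ^ (2 * β))⁻¹ * u ^ (2 * β - n) := by
  have hR0 : 0 < R := hu.trans_le huR
  have hφR := hφ _ (inv_pos.2 (pow_pos hR0 2))
  have hscale : a * (R ^ 2 / u ^ 2) ^ β * φ ((R ^ 2)⁻¹) ≤ φ ((u ^ 2)⁻¹) := by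
    have h := hlow (R ^ 2 / u ^ 2) (R ^ 2)⁻¹ ((one_le_div (by positivity)).2 (by gcongr))
      (one_le_inv₀ (by positivity) |>.2 (pow_le_one₀ hR0.le hR))
    rwa [div_mul_eq_mul_div, mul_inv_cancel₀ (by positivity), one_div] at h
  have hpow : (R ^ 2 / u ^ 2) ^ β * u ^ n = R ^ (2 * β) * u ^ ((n : ℝ) - 2 * β) := by
    rw [← div_pow, ← Real.rpow_natCast (R / u), ← Real.rpow_mul (by positivity),
      Real.div_rpow hR0.le hu.le, Real.rpow_sub hu, ← Real.rpow_natCast u n]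
    push_cast
    field_simp
  have hlower : a * φ ((R ^ 2)⁻¹) * R ^ (2 * β) * u ^ ((n : ℝ) - 2 * β) ≤ phiKernel φ n u := by
    calc a * φ ((R ^ 2)⁻¹) * R ^ (2 * β) * u ^ ((n : ℝ) - 2 * β)
        = a * (R ^ 2 / u ^ 2) ^ β * φ ((R ^ 2)⁻¹) * u ^ n := by
          rw [mul_assoc (a * _), ← hpow]; ring
      _ ≤ phiKernel φ n u := by unfold phiKernel; gcongr
  calc (phiKernel φ n u)⁻¹ ≤ (a * φ ((R ^ 2)⁻¹) * R ^ (2 * β) * u ^ ((n : ℝ) - 2 * β))⁻¹ :=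
        inv_anti₀ (by positivity) hlower
    _ = (a * φ ((R ^ 2)⁻¹) * R ^ (2 * β))⁻¹ * u ^ (2 * β - n) := by
        rw [mul_inv, ← Real.rpow_neg hu.le, neg_sub]

theorem phiKernel_dist_div_le {X : Type*} [MetricSpace X] (hn : 2 ≤ n)
    (hφ : ∀ t, 0 < t → 0 < φ t) (hmono : MonotoneOn φ (Ioi 0))
    (hup : ∀ lam t : ℝ, 1 ≤ lam → 0 < t → φ (lam * t) ≤ lam * φ t) {a β : ℝ} (ha : 0 < a)
    (hlow : ∀ lam t : ℝ, 1 ≤ lam → 1 ≤ t → a * lam ^ β * φ t ≤ φ (lam * t))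
    {R : ℝ} (hR : R ≤ 1) {v w y : X} (hvw : v ≠ w) (hvy : dist v y ≤ R) (hyw : dist y w ≤ R) :
    phiKernel φ n (dist v w) / (phiKernel φ n (dist v y) * phiKernel φ n (dist y w)) ≤
      2 ^ n * (a * φ ((R ^ 2)⁻¹) * R ^ (2 * β))⁻¹ *
        (dist v y ^ (2 * β - n) + dist y w ^ (2 * β - n)) := by
  have hR0 : 0 < R := by linarith [dist_triangle v y w, dist_pos.2 hvw]
  have hφR := hφ _ (inv_pos.2 (pow_pos hR0 2))
  have hRHS : 0 ≤ 2 ^ n * (a * φ ((R ^ 2)⁻¹) * R ^ (2 * β))⁻¹ *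
      (dist v y ^ (2 * β - n) + dist y w ^ (2 * β - n)) := by positivity
  rcases eq_or_ne v y with rfl | hyv
  · refine (le_of_eq ?_).trans hRHS
    rw [dist_self, phiKernel_zero (by omega), zero_mul, div_zero]
  rcases eq_or_ne y w with rfl | hyw
  · refine (le_of_eq ?_).trans hRHS
    rw [dist_self, phiKernel_zero (by omega), mul_zero, div_zero]
  have hr := dist_pos.2 hyv
  have ht := dist_pos.2 hyw
  calc phiKernel φ n (dist v w) / (phiKernel φ n (dist v y) * phiKernel φ n (dist y w))
      ≤ 2 ^ n * ((phiKernel φ n (dist v y))⁻¹ + (phiKernel φ n (dist y w))⁻¹) :=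
        div_mul_le_mul_inv_add_inv (phiKernel_pos hφ hr) (phiKernel_pos hφ ht) (by positivity)
          (phiKernel_le_of_le_add (phiKernel_monotoneOn (fun t ht => (hφ t ht).le) hup hn) hmono
            (dist_pos.2 hvw) hr ht (dist_triangle v y w))
    _ ≤ 2 ^ n * ((a * φ ((R ^ 2)⁻¹) * R ^ (2 * β))⁻¹ * dist v y ^ (2 * β - n) +
          (a * φ ((R ^ 2)⁻¹) * R ^ (2 * β))⁻¹ * dist y w ^ (2 * β - n)) := by
        gcongr <;> exact phiKernel_inv_le hφ ha hlow (by assumption) (by assumption) hR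
    _ = _ := by ring

end PhiKernel

/-- The analytic core of Lemma 4.1: a uniform bound, with constant depending
only on `n`, `a`, `β`, for the 3G-type integral over a ball. -/
theorem threeG_integral_bound (n : ℕ) (hn : 2 ≤ n) (a β : ℝ)
    (ha : 0 < a) (hβ : β ∈ Set.Ioo (0 : ℝ) 2) :
    ∃ C : ℝ, 0 < C ∧ ∀ φ : ℝ → ℝ,
      (∀ t : ℝ, 0 < t → 0 < φ t) →
      MonotoneOn φ (Set.Ioi (0 : ℝ)) →
      (∀ lam t : ℝ, 1 ≤ lam → 0 < t → φ (lam * t) ≤ lam * φ t) →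
      (∀ lam t : ℝ, 1 ≤ lam → 1 ≤ t → a * lam ^ β * φ t ≤ φ (lam * t)) →
      ∀ ρ : ℝ, ρ ∈ Set.Ioc (0 : ℝ) (1 / 2) →
      ∀ x v w : EuclideanSpace ℝ (Fin n),
        v ∈ Metric.ball x ρ → w ∈ Metric.ball x ρ → v ≠ w →
        (∫⁻ y in Metric.ball x ρ,
            ENNReal.ofReal
              (φ ((dist v w ^ 2)⁻¹) * dist v w ^ n /
                (φ ((dist v y ^ 2)⁻¹) * dist v y ^ n *
                  (φ ((dist y w ^ 2)⁻¹) * dist y w ^ n)))) ≤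
          ENNReal.ofReal (C / φ (((2 * ρ) ^ 2)⁻¹)) := by
  have : Nontrivial (EuclideanSpace ℝ (Fin n)) :=
    Module.nontrivial_of_finrank_pos (R := ℝ) (by rw [finrank_euclideanSpace_fin]; omega)
  obtain ⟨A, hA, hJ⟩ : ∃ A : ℝ, 0 < A ∧ ∫⁻ u in ball (0 : EuclideanSpace ℝ (Fin n)) 1,
      ENNReal.ofReal (‖u‖ ^ (2 * β - n)) = ENNReal.ofReal A := by
    have hJ_top := setLIntegral_unitBall_norm_rpow_lt_top
      (volume : Measure (EuclideanSpace ℝ (Fin n))) (s := 2 * β - n)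
      (by rw [finrank_euclideanSpace_fin]; linarith [hβ.1])
    exact ⟨_, ENNReal.toReal_pos (setLIntegral_unitBall_norm_rpow_pos volume _).ne' hJ_top.ne,
      (ENNReal.ofReal_toReal hJ_top.ne).symm⟩
  refine ⟨2 ^ (n + 1) * A / a, by positivity, ?_⟩
  intro φ hφ hmono hup hlow ρ ⟨hρ0, hρ⟩ x v w hv hw hvw
  have hφR : 0 < φ (((2 * ρ) ^ 2)⁻¹) := hφ _ (by positivity)
  have hbound := setLIntegral_ball_le_of_le_dist_rpow_add volume hρ0 hv hw (by positivity)
    fun y hy => phiKernel_dist_div_le hn hφ hmono hup ha hlow (R := 2 * ρ) (by linarith) hvw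
      (mem_ball'.1 (ball_subset_ball_two_mul hv hy)).le
      (mem_ball.1 (ball_subset_ball_two_mul hw hy)).le
  refine hbound.trans_eq ?_
  rw [hJ, ← ENNReal.ofReal_mul (by positivity), finrank_euclideanSpace_fin, sub_add_cancel]
  congr 1
  field_simp
  ring
end
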